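/- arXiv:0910.4840 — 3 statements merged into one kernel-verified Lean document; each statement's English description precedes it below -/
import Mathlib

section
/- For all nonnegative integers A and B, the product of shifted Pochhammer polynomials satisfies ((X+1-A)/2)_A · ((X+1-B)/2)_B = Σ_{j=0}^{⌊(A+B)/2⌋} (-1)^j · (-A/2)_j (-B/2)_j (-(A+B)/2)_j / j! · ((X+1-A-B+2j)/2)_{A+B-2j}, as an identity of polynomials in X (equivalently, for all real X). -/
open Finset

/-- Pochhammer symbol `(x)_m = x(x+1)⋯(x+m-1)`. -/
noncomputable def poch (x : ℝ) (m : ℕ) : ℝ := (ascPochhammer ℝ m).eval x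

lemma poch_zero (x : ℝ) : poch x 0 = 1 := by simp [poch]

lemma poch_one (x : ℝ) : poch x 1 = x := by simp [poch]

lemma poch_succ (x : ℝ) (k : ℕ) : poch x (k+1) = poch x k * (x + k) :=
  ascPochhammer_succ_eval k x

lemma poch_succ_left (x : ℝ) (k : ℕ) : poch x (k+1) = x * poch (x+1) k := by
  simp [poch, ascPochhammer_succ_left, Polynomial.eval_comp]

lemma poch_two (x : ℝ) : poch x 2 = x * (x+1) := by
  have e : (2:ℕ) = 1 + 1 := rfl
  rw [e, poch_succ, poch_one]; push_cast; ring

lemma poch_shift (x : ℝ) (k : ℕ) : poch (x - 1) (k+1) = (x-1) * poch x k := by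
  rw [poch_succ_left, sub_add_cancel]

lemma poch_neg_nat (n j : ℕ) (h : n < j) : poch (-(n:ℝ)) j = 0 := by
  induction j with
  | zero => omega
  | succ k ih =>
    rcases Nat.lt_or_ge n k with hk | hk
    · rw [poch_succ, ih hk, zero_mul]
    · have hnk : k = n := by omega
      subst hnk
      rw [poch_succ]
      simp

/-- Shifted Pochhammer polynomial. -/
noncomputable def Ff (A : ℕ) (X : ℝ) : ℝ := poch ((X + 1 - A) / 2) A

/-- Coefficients of the linearization formula. -/
noncomputable def cc (A B j : ℕ) : ℝ :=
  (-1) ^ j *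
    (poch (-(A : ℝ) / 2) j * poch (-(B : ℝ) / 2) j *
      poch (-((A : ℝ) + B) / 2) j / (Nat.factorial j))

lemma cc_zero (A B : ℕ) : cc A B 0 = 1 := by
  simp [cc, poch_zero]

lemma cc_symm (A B j : ℕ) : cc A B j = cc B A j := by
  unfold cc
  rw [show -((A:ℝ)+B)/2 = -((B:ℝ)+A)/2 by ring]
  ring

lemma cc_vanish (A B j : ℕ) (h : A + B + 1 ≤ 2*j) : cc A B j = 0 := by
  unfold cc
  rcases Nat.even_or_odd A with hA | hA
  · obtain ⟨a, rfl⟩ := hA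
    have e : -((a+a : ℕ):ℝ)/2 = -(a:ℝ) := by push_cast; ring
    rw [e, poch_neg_nat a j (by omega)]
    ring
  · rcases Nat.even_or_odd B with hB | hB
    · obtain ⟨b, rfl⟩ := hB
      have e : -((b+b : ℕ):ℝ)/2 = -(b:ℝ) := by push_cast; ring
      rw [e, poch_neg_nat b j (by omega)]
      ring
    · obtain ⟨a, ha⟩ := hA
      obtain ⟨b, hb⟩ := hB
      have e : -((A:ℝ)+B)/2 = -(((a+b+1 : ℕ)):ℝ) := by
        subst ha hb; push_cast; ring
      rw [e, poch_neg_nat (a+b+1) j (by omega)]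
      ring

lemma cc_rec (A B k : ℕ) :
    cc A (B+2) (k+1) =
      cc A B (k+1) + cc A B k * (((A:ℝ)-2*k) * ((A:ℝ)+2*B+2-2*k) / 4) := by
  unfold cc
  have e1 : -(((B:ℕ)+2 : ℕ):ℝ)/2 = -(B:ℝ)/2 - 1 := by push_cast; ring
  have e2 : -((A:ℝ)+(((B:ℕ)+2 : ℕ)):ℝ)/2 = -((A:ℝ)+B)/2 - 1 := by push_cast; ring
  rw [e1, e2, poch_shift, poch_shift, poch_succ (-(A:ℝ)/2) k,
      poch_succ (-(B:ℝ)/2) k, poch_succ (-((A:ℝ)+B)/2) k,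
      Nat.factorial_succ]
  have hfac : ((Nat.factorial k : ℕ):ℝ) ≠ 0 :=
    Nat.cast_ne_zero.mpr (Nat.factorial_ne_zero k)
  have hk1 : ((k:ℝ)+1) ≠ 0 := by positivity
  push_cast
  field_simp
  ring

lemma Ff_rec (A : ℕ) (X : ℝ) :
    Ff (A+2) X = Ff A X * ((X^2 - ((A:ℝ)+1)^2)/4) := by
  unfold Ff
  have e : A + 2 = (A+1) + 1 := rfl
  rw [e, poch_succ_left, poch_succ]
  have e2 : (X + 1 - ((A:ℕ)+1+1:ℕ))/2 + 1 = (X + 1 - (A:ℝ))/2 := by push_cast; ring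
  rw [e2]
  push_cast
  ring

lemma step (A B : ℕ)
    (h : ∀ X : ℝ, Ff A X * Ff B X
        = ∑ j ∈ Finset.range ((A+B)/2+1), cc A B j * Ff (A+B-2*j) X)
    (X : ℝ) :
    Ff A X * Ff (B+2) X
      = ∑ j ∈ Finset.range ((A+(B+2))/2+1), cc A (B+2) j * Ff (A+(B+2)-2*j) X := by
  set M := (A+B)/2 with hMdef
  have hM : (A+(B+2))/2 + 1 = (M + 1) + 1 := by omega
  have lhs_eq : Ff A X * Ff (B+2) X
      = ∑ j ∈ Finset.range (M+1), cc A B j * Ff (A+B+2-2*j) X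
        + ∑ j ∈ Finset.range (M+1),
            cc A B j * (((A:ℝ)-2*j) * ((A:ℝ)+2*B+2-2*j)/4) * Ff (A+B-2*j) X := by
    rw [Ff_rec, ← mul_assoc, h X, Finset.sum_mul, ← Finset.sum_add_distrib]
    refine Finset.sum_congr rfl fun j hj => ?_
    have hj' : 2*j ≤ A+B := by
      have := Finset.mem_range.mp hj; omega
    have hidx : A+B+2-2*j = (A+B-2*j) + 2 := by omega
    have hcast : ((A+B-2*j : ℕ):ℝ) = (A:ℝ)+B-2*j := by
      rw [Nat.cast_sub hj']; push_cast; ring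
    rw [hidx, Ff_rec (A+B-2*j) X, hcast]
    ring
  rw [lhs_eq, hM]
  -- handle the target sum
  conv_rhs => rw [Finset.sum_range_succ']
  simp only [show ∀ k, A+(B+2)-2*(k+1) = A+B-2*k from fun k => by omega,
    show A+(B+2)-2*0 = A+B+2 from by omega, cc_zero, one_mul]
  have hsplit : ∀ k ∈ Finset.range (M+1),
      cc A (B+2) (k+1) * Ff (A+B-2*k) X
        = cc A B (k+1) * Ff (A+B-2*k) X
          + cc A B k * (((A:ℝ)-2*k) * ((A:ℝ)+2*B+2-2*k)/4) * Ff (A+B-2*k) X := by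
    intro k _
    rw [cc_rec]; ring
  rw [Finset.sum_congr rfl hsplit, Finset.sum_add_distrib]
  have e1 : ∑ j ∈ Finset.range (M+1), cc A B j * Ff (A+B+2-2*j) X
      = (∑ k ∈ Finset.range (M+1), cc A B (k+1) * Ff (A+B-2*k) X) + Ff (A+B+2) X := by
    have h2 := Finset.sum_range_succ' (fun j => cc A B j * Ff (A+B+2-2*j) X) (M+1)
    rw [Finset.sum_range_succ] at h2
    rw [cc_vanish A B (M+1) (by omega), zero_mul, add_zero] at h2
    simp only [show ∀ k, A+B+2-2*(k+1) = A+B-2*k from fun k => by omega,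
      show A+B+2-2*0 = A+B+2 from by omega, cc_zero, one_mul] at h2
    exact h2
  rw [e1]
  ring

lemma key : ∀ n A B : ℕ, A + B = n → ∀ X : ℝ,
    Ff A X * Ff B X = ∑ j ∈ Finset.range ((A+B)/2+1), cc A B j * Ff (A+B-2*j) X := by
  intro n
  induction n using Nat.strong_induction_on with
  | _ n ih =>
    intro A B hAB X
    rcases Nat.lt_or_ge B 2 with hB | hB
    · rcases Nat.lt_or_ge A 2 with hA | hA
      · -- base cases: A, B ∈ {0, 1}
        have symm_sum : ∀ (A B : ℕ),
            (∑ j ∈ Finset.range ((A+B)/2+1), cc A B j * Ff (A+B-2*j) X)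
              = ∑ j ∈ Finset.range ((B+A)/2+1), cc B A j * Ff (B+A-2*j) X := by
          intro A B
          rw [Nat.add_comm B A]
          exact Finset.sum_congr rfl fun j _ => by rw [cc_symm]
        interval_cases A <;> interval_cases B <;>
          simp only [Finset.sum_range_succ, Finset.sum_range_one] <;>
          norm_num [Ff, cc, poch_zero, poch_one, poch_two, Nat.factorial] <;>
          ring
      · obtain ⟨A', rfl⟩ : ∃ A', A = A'+2 := ⟨A-2, by omega⟩
        have hprev : ∀ Y : ℝ, Ff B Y * Ff A' Y
            = ∑ j ∈ Finset.range ((B+A')/2+1), cc B A' j * Ff (B+A'-2*j) Y := by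
          intro Y
          exact ih (n-2) (by omega) B A' (by omega) Y
        have hstep := step B A' hprev X
        calc Ff (A'+2) X * Ff B X = Ff B X * Ff (A'+2) X := by ring
          _ = ∑ j ∈ Finset.range ((B+(A'+2))/2+1), cc B (A'+2) j * Ff (B+(A'+2)-2*j) X :=
              hstep
          _ = ∑ j ∈ Finset.range (((A'+2)+B)/2+1), cc (A'+2) B j * Ff ((A'+2)+B-2*j) X := by
              rw [Nat.add_comm B (A'+2)]
              exact Finset.sum_congr rfl fun j _ => by rw [cc_symm]
    · obtain ⟨B', rfl⟩ : ∃ B', B = B'+2 := ⟨B-2, by omega⟩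
      exact step A B' (fun Y => ih (n-2) (by omega) A B' (by omega) Y) X

/-- Lemma 2.2: product formula for shifted Pochhammer polynomials. -/
theorem stmt_0 (A B : ℕ) (X : ℝ) :
    poch ((X + 1 - A) / 2) A * poch ((X + 1 - B) / 2) B =
      ∑ j ∈ Finset.range ((A + B) / 2 + 1),
        (-1) ^ j *
          (poch (-(A : ℝ) / 2) j * poch (-(B : ℝ) / 2) j *
            poch (-((A : ℝ) + B) / 2) j / (Nat.factorial j)) *
          poch ((X + 1 - A - B + 2 * j) / 2) (A + B - 2 * j) := by
  have h := key (A+B) A B rfl X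
  unfold Ff cc at h
  rw [h]
  refine Finset.sum_congr rfl fun j hj => ?_
  have hj' : 2*j ≤ A+B := by
    have := Finset.mem_range.mp hj; omega
  have harg : (X + 1 - ((A+B-2*j : ℕ):ℝ))/2 = (X + 1 - (A:ℝ) - B + 2*j)/2 := by
    rw [Nat.cast_sub hj']; push_cast; ring
  rw [harg]
end

section
/- For a nonnegative integer k ≤ M and real X not in {0,1,...,M}, Σ_{b=0}^{M} (-1)^b C(M,b) C(b,k) / (X-b) = (-1)^M · M! / (X-M)_{M+1} · C(X,k), where C(X,k) is the binomial coefficient polynomial and (X-M)_{M+1} the Pochhammer symbol. -/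
open Finset

noncomputable def genBinom (x : ℝ) (k : ℕ) : ℝ :=
  (descPochhammer ℝ k).eval x / (Nat.factorial k)

/-!
Reindexing `b = k + i` and using `C(M, k + i) C(k + i, k) = C(M, k) C(M - k, i)` reduces the sum
to the case `k = 0` at the point `X - k`. Up to the sign `(-1)^M`, that case is the `M`-th forward
difference at `0` of `t ↦ 1 / (X - t)`, and by induction
`Δ^n (1 / (x - t)) = n! / ((x - t)(x - t - 1)⋯(x - t - n))`: the two products in a difference step
share all factors but `x - t` and `x - t - n - 1`, which differ by `n + 1`.
Finally `(X - M)_{M+1} = X (X - 1)⋯(X - M)` splits as `k! C(X, k)` times `(X - k)⋯(X - M)`.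
-/

open Nat

section Field

variable {K : Type*} [Field K] [CharZero K]

theorem fwdDiff_iter_inv_sub (x : K) (n : ℕ) (t : K) (ht : ∀ j ≤ n, x - t ≠ j) :
    (fwdDiff 1)^[n] (fun s ↦ (x - s)⁻¹) t = n ! / ∏ j ∈ range (n + 1), (x - t - j) := by
  induction n generalizing t with
  | zero => simp
  | succ n ih =>
    have ht' : ∀ j ≤ n, x - (t + 1) ≠ j := fun j hj h ↦
      ht (j + 1) (by omega) (by push_cast; linear_combination h)
    set P := ∏ j ∈ range (n + 1), (x - t - j)
    set Q := ∏ j ∈ range (n + 1), (x - (t + 1) - j)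
    have hP : P ≠ 0 := prod_ne_zero_iff.2 fun j hj ↦ sub_ne_zero.2 (ht j (by grind))
    have hQ : Q ≠ 0 := prod_ne_zero_iff.2 fun j hj ↦ sub_ne_zero.2 (ht' j (by grind))
    have hlast : ∏ j ∈ range (n + 2), (x - t - j) = P * (x - t - (n + 1 : ℕ)) :=
      prod_range_succ _ _
    have hfirst : ∏ j ∈ range (n + 2), (x - t - j) = (x - t) * Q := by
      rw [prod_range_succ', mul_comm]
      simp only [cast_add, cast_one, cast_zero, sub_zero, sub_add_eq_sub_sub, sub_right_comm, Q]
    have hlong : ∏ j ∈ range (n + 2), (x - t - j) ≠ 0 :=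
      hlast ▸ mul_ne_zero hP (sub_ne_zero.2 (ht _ le_rfl))
    rw [Function.iterate_succ_apply', fwdDiff, ih (t + 1) ht', ih t fun j hj ↦ ht j (by omega),
      div_sub_div _ _ hQ hP, div_eq_div_iff (mul_ne_zero hQ hP) hlong, factorial_succ]
    push_cast at hlast ⊢
    linear_combination (n ! * P : K) * hfirst - (n ! * Q : K) * hlast

theorem sum_range_neg_one_pow_mul_choose_div_sub (n : ℕ) (x : K) (hx : ∀ j ≤ n, x ≠ j) :
    ∑ j ∈ range (n + 1), (-1) ^ j * n.choose j / (x - j) =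
      (-1) ^ n * n ! / ∏ j ∈ range (n + 1), (x - j) := by
  have h := fwdDiff_iter_inv_sub x n 0 (by simpa using hx)
  rw [fwdDiff_iter_eq_sum_shift] at h
  simp only [sub_zero, zero_add, nsmul_eq_mul, mul_one, zsmul_eq_mul] at h
  rw [mul_div_assoc, ← h, mul_sum]
  refine sum_congr rfl fun j hj ↦ ?_
  have hsign : (-1 : K) ^ n * (-1) ^ (n - j) = (-1) ^ j := by
    rw [← pow_add, show n + (n - j) = j + 2 * (n - j) by grind, pow_add, pow_mul]
    simp
  push_cast
  rw [← mul_assoc, ← mul_assoc, hsign, div_eq_mul_inv]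

theorem sum_range_choose_mul_choose_div_sub (M k : ℕ) (hk : k ≤ M) (x : K) :
    ∑ b ∈ range (M + 1), (-1) ^ b * M.choose b * b.choose k / (x - b) =
      (-1) ^ k * M.choose k *
        ∑ i ∈ range (M - k + 1), (-1) ^ i * (M - k).choose i / (x - k - i) := by
  rw [show M + 1 = k + (M - k + 1) by omega, sum_range_add, mul_sum,
    sum_eq_zero fun b hb ↦ by rw [choose_eq_zero_of_lt (mem_range.1 hb)]; simp, zero_add]
  refine sum_congr rfl fun i _ ↦ ?_
  have h : (M.choose (k + i) : K) * (k + i).choose k = M.choose k * (M - k).choose i := by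
    exact_mod_cast add_tsub_cancel_left k i ▸ choose_mul (n := M) (le_add_right k i)
  rw [mul_assoc _ (M.choose (k + i) : K), h, cast_add, sub_sub, pow_add]
  ring

end Field

theorem genBinom_natCast (b k : ℕ) : genBinom b k = b.choose k :=
  (cast_choose_eq_descPochhammer_div (K := ℝ) b k).symm

theorem genBinom_eq_prod (x : ℝ) (k : ℕ) :
    genBinom x k = (∏ j ∈ range k, (x - j)) / k ! := by
  rw [genBinom, descPochhammer_eval_eq_prod_range]

theorem poch_sub_eq_prod (x : ℝ) (n : ℕ) :
    poch (x - n) (n + 1) = ∏ j ∈ range (n + 1), (x - j) := by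
  rw [poch, ← descPochhammer_eval_eq_prod_range, descPochhammer_eval_eq_ascPochhammer]
  push_cast
  ring_nf

/-- The basis case of the partial-fraction finite-difference lemma. -/
theorem stmt_4 (M k : ℕ) (hk : k ≤ M) (X : ℝ) (hX : ∀ b : ℕ, b ≤ M → X ≠ b) :
    ∑ b ∈ Finset.range (M + 1),
        (-1) ^ b * (Nat.choose M b) * genBinom b k / (X - b) =
      (-1) ^ M * (Nat.factorial M) / poch (X - M) (M + 1) * genBinom X k := by
  have hXk : ∀ i ≤ M - k, X - k ≠ i := fun i hi h ↦
    hX (k + i) (by omega) (by push_cast; linear_combination h)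
  have hsplit : ∏ j ∈ range (M + 1), (X - j) =
      (∏ j ∈ range k, (X - j)) * ∏ i ∈ range (M - k + 1), (X - k - i) := by
    rw [show M + 1 = k + (M - k + 1) by omega, prod_range_add]
    simp only [cast_add, sub_sub]
  have hlow : ∏ j ∈ range k, (X - j) ≠ 0 :=
    prod_ne_zero_iff.2 fun j hj ↦ sub_ne_zero.2 (hX j (by grind))
  have hhigh : ∏ i ∈ range (M - k + 1), (X - k - i) ≠ 0 :=
    prod_ne_zero_iff.2 fun i hi ↦ sub_ne_zero.2 (hXk i (by grind))
  have hfact : (M.choose k : ℝ) * k ! * (M - k)! = M ! := by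
    exact_mod_cast choose_mul_factorial_mul_factorial hk
  have hsign : (-1 : ℝ) ^ M = (-1) ^ k * (-1) ^ (M - k) := by
    rw [← pow_add, add_tsub_cancel_of_le hk]
  simp only [genBinom_natCast]
  rw [sum_range_choose_mul_choose_div_sub M k hk, sum_range_neg_one_pow_mul_choose_div_sub _ _ hXk,
    poch_sub_eq_prod, genBinom_eq_prod, hsplit, hsign, ← hfact]
  field_simp
end

section
/- (Pfaff–Saalschütz) For a nonnegative integer n and parameters a, b, c (generic, so that denominators are nonzero): Σ_{m=0}^{n} (a)_m (b)_m (-n)_m / (m! (c)_m (1+a+b-c-n)_m) = (c-a)_n (c-b)_n / ((c)_n (c-a-b)_n). -/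
open Finset

/-!
Clearing denominators, the identity becomes the polynomial identity
`∑ₘ C(n,m) (a)ₘ (b)ₘ (c+m)ₙ₋ₘ (c-a-b)ₙ₋ₘ = (c-a)ₙ (c-b)ₙ`, valid over any commutative ring;
this uses `(-n)ₘ = (-1)ᵐ m! C(n,m)` and the reflection `(1+a+b-c-n)ₘ = (-1)ᵐ (c-a-b+n-m)ₘ`.
Writing `tₙ(m)` for the summands, `w m = (a+m)(b+m)` and `Kₙ = (c-a+n)(c-b+n)`, one checks
`tₙ₊₁(m) = (Kₙ - w m) tₙ(m) + w (m-1) tₙ(m-1)` (a Wilf–Zeilberger certificate), so the `w`-terms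
telescope and the sums satisfy `Sₙ₊₁ = Kₙ Sₙ`, which is the recursion of the right-hand side.
-/

open Polynomial

section Pochhammer

variable {R : Type*} [CommRing R]

theorem ascPochhammer_eval_add (x : R) (i j : ℕ) :
    (ascPochhammer R (i + j)).eval x =
      (ascPochhammer R i).eval x * (ascPochhammer R j).eval (x + i) := by
  rw [← ascPochhammer_mul, eval_mul, eval_comp]
  simp

theorem ascPochhammer_succ_eval_left (x : R) (n : ℕ) :
    (ascPochhammer R (n + 1)).eval x = x * (ascPochhammer R n).eval (x + 1) := by
  rw [add_comm, ascPochhammer_eval_add]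
  simp

theorem ascPochhammer_eval_neg (x : R) (m : ℕ) :
    (ascPochhammer R m).eval (-x) = (-1) ^ m * (ascPochhammer R m).eval (x - m + 1) := by
  rw [ascPochhammer_eval_neg_eq_descPochhammer, descPochhammer_eval_eq_ascPochhammer]

theorem ascPochhammer_eval_neg_natCast (n m : ℕ) :
    (ascPochhammer R m).eval (-(n : R)) = (-1) ^ m * (m.factorial * n.choose m : ℕ) := by
  rw [ascPochhammer_eval_neg_eq_descPochhammer, descPochhammer_eval_eq_descFactorial,
    Nat.descFactorial_eq_factorial_mul_choose]

end Pochhammer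

theorem Finset.sum_range_succ_eq_mul_of_recurrence {R : Type*} [CommRing R]
    (t : ℕ → ℕ → R) (w : ℕ → R) (K : R) (n : ℕ) (hvanish : t n (n + 1) = 0)
    (hzero : t (n + 1) 0 = (K - w 0) * t n 0)
    (hsucc : ∀ m, t (n + 1) (m + 1) = (K - w (m + 1)) * t n (m + 1) + w m * t n m) :
    ∑ m ∈ range (n + 2), t (n + 1) m = K * ∑ m ∈ range (n + 1), t n m :=
  calc ∑ m ∈ range (n + 2), t (n + 1) m
      = ∑ m ∈ range (n + 2), (K - w m) * t n m + ∑ m ∈ range (n + 1), w m * t n m := by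
        rw [sum_range_succ', sum_range_succ' (fun m => (K - w m) * t n m)]
        simp only [hsucc, hzero, sum_add_distrib]
        ring
    _ = ∑ m ∈ range (n + 1), ((K - w m) * t n m + w m * t n m) := by
        rw [sum_range_succ, hvanish, mul_zero, add_zero, sum_add_distrib]
    _ = K * ∑ m ∈ range (n + 1), t n m := by
        rw [mul_sum]
        exact sum_congr rfl fun m _ => by ring

section Saalschutz

variable {R : Type*} [CommRing R] (a b c : R)

noncomputable def saalschutzTerm (n m : ℕ) : R :=
  n.choose m * (ascPochhammer R m).eval a * (ascPochhammer R m).eval b *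
    (ascPochhammer R (n - m)).eval (c + m) * (ascPochhammer R (n - m)).eval (c - a - b)

theorem saalschutzTerm_of_lt {n m : ℕ} (h : n < m) : saalschutzTerm a b c n m = 0 := by
  simp [saalschutzTerm, Nat.choose_eq_zero_of_lt h]

theorem saalschutzTerm_succ_zero (n : ℕ) :
    saalschutzTerm a b c (n + 1) 0 =
      ((c - a + n) * (c - b + n) - a * b) * saalschutzTerm a b c n 0 := by
  simp only [saalschutzTerm, Nat.sub_zero, ascPochhammer_succ_eval, Nat.choose_zero_right,
    Nat.cast_one, ascPochhammer_zero, eval_one, mul_one, Nat.cast_zero, add_zero, one_mul]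
  ring

theorem saalschutzTerm_succ_succ (n m : ℕ) :
    saalschutzTerm a b c (n + 1) (m + 1) =
      ((c - a + n) * (c - b + n) - (a + (m + 1 : ℕ)) * (b + (m + 1 : ℕ))) *
          saalschutzTerm a b c n (m + 1) + (a + m) * (b + m) * saalschutzTerm a b c n m := by
  rcases lt_or_ge m n with h | h
  · obtain ⟨k, rfl⟩ : ∃ k, n = m + 1 + k := ⟨n - (m + 1), by omega⟩
    have hchoose :
        ((m + 1 + k).choose (m + 1) : R) * (m + 1) = (m + 1 + k).choose m * (k + 1) := by
      have := Nat.choose_succ_right_eq (m + 1 + k) m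
      rw [show m + 1 + k - m = k + 1 by omega] at this
      simpa using congrArg (Nat.cast : ℕ → R) this
    simp only [saalschutzTerm, show m + 1 + k + 1 - (m + 1) = k + 1 by omega,
      show m + 1 + k - (m + 1) = k by omega, show m + 1 + k - m = k + 1 by omega,
      Nat.choose_succ_succ']
    rw [ascPochhammer_succ_eval_left (c + m), ascPochhammer_succ_eval m a,
      ascPochhammer_succ_eval m b, ascPochhammer_succ_eval k (c - a - b),
      ascPochhammer_succ_eval k (c + (m + 1 : ℕ))]
    push_cast
    rw [← add_assoc c]
    linear_combination (-(c - a - b + k)) * (ascPochhammer R m).eval a * (a + m) *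
      (ascPochhammer R m).eval b * (b + m) * (ascPochhammer R k).eval (c + m + 1) *
      (ascPochhammer R k).eval (c - a - b) * hchoose
  · rw [saalschutzTerm_of_lt a b c (Nat.lt_succ_of_le h), mul_zero, zero_add]
    rcases h.lt_or_eq with h | rfl
    · rw [saalschutzTerm_of_lt a b c h, saalschutzTerm_of_lt a b c (by omega), mul_zero]
    · simp [saalschutzTerm, ascPochhammer_succ_eval]
      ring

theorem sum_saalschutzTerm (n : ℕ) :
    ∑ m ∈ range (n + 1), saalschutzTerm a b c n m =
      (ascPochhammer R n).eval (c - a) * (ascPochhammer R n).eval (c - b) := by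
  induction n with
  | zero => simp [saalschutzTerm]
  | succ n ih =>
    rw [sum_range_succ_eq_mul_of_recurrence _ (fun m => (a + m) * (b + m))
      ((c - a + n) * (c - b + n)) n (saalschutzTerm_of_lt a b c n.lt_succ_self)
      (by simpa using saalschutzTerm_succ_zero a b c n) (saalschutzTerm_succ_succ a b c n), ih,
      ascPochhammer_succ_eval, ascPochhammer_succ_eval]
    ring

end Saalschutz

theorem hypergeometricTerm_eq_saalschutzTerm_div {K : Type*} [Field K] [CharZero K] (a b c : K)
    {n m : ℕ} (hm : m ≤ n) (hcn : (ascPochhammer K n).eval c ≠ 0)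
    (hcab : (ascPochhammer K n).eval (c - a - b) ≠ 0) :
    (ascPochhammer K m).eval a * (ascPochhammer K m).eval b * (ascPochhammer K m).eval (-(n : K)) /
        (m.factorial * (ascPochhammer K m).eval c *
          (ascPochhammer K m).eval (1 + a + b - c - n)) =
      saalschutzTerm a b c n m /
        ((ascPochhammer K n).eval c * (ascPochhammer K n).eval (c - a - b)) := by
  obtain ⟨k, rfl⟩ := Nat.exists_eq_add_of_le hm
  have hc_split : (ascPochhammer K (m + k)).eval c =
      (ascPochhammer K m).eval c * (ascPochhammer K k).eval (c + m) :=
    ascPochhammer_eval_add c m k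
  have hcab_split : (ascPochhammer K (m + k)).eval (c - a - b) =
      (ascPochhammer K k).eval (c - a - b) * (ascPochhammer K m).eval (c - a - b + k) := by
    rw [add_comm, ascPochhammer_eval_add]
  have hreflect : (ascPochhammer K m).eval (1 + a + b - c - (m + k : ℕ)) =
      (-1) ^ m * (ascPochhammer K m).eval (c - a - b + k) := by
    rw [show 1 + a + b - c - (m + k : ℕ) = -(c - a - b + k + m - 1) by push_cast; ring,
      ascPochhammer_eval_neg, show c - a - b + k + m - 1 - m + 1 = c - a - b + k by ring]
  rw [hc_split] at hcn ⊢
  rw [hcab_split] at hcab ⊢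
  have := right_ne_zero_of_mul hcn
  have := left_ne_zero_of_mul hcab
  have : (m.factorial : K) ≠ 0 := Nat.cast_ne_zero.mpr m.factorial_ne_zero
  rw [hreflect, ascPochhammer_eval_neg_natCast, saalschutzTerm, Nat.add_sub_cancel_left]
  field_simp
  push_cast
  ring

theorem stmt_7_general (n : ℕ) (a b c : ℝ)
    (hcn : poch c n ≠ 0) (hcab : poch (c - a - b) n ≠ 0) :
    ∑ m ∈ Finset.range (n + 1),
        poch a m * poch b m * poch (-(n : ℝ)) m /
          ((Nat.factorial m) * poch c m * poch (1 + a + b - c - n) m) =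
      poch (c - a) n * poch (c - b) n / (poch c n * poch (c - a - b) n) := by
  unfold poch at *
  rw [← sum_saalschutzTerm, sum_div]
  exact sum_congr rfl fun m hm =>
    hypergeometricTerm_eq_saalschutzTerm_div a b c (Nat.lt_succ_iff.mp (mem_range.mp hm)) hcn hcab

/-- Pfaff–Saalschütz summation for a terminating balanced `₃F₂`. -/
theorem stmt_7 (n : ℕ) (a b c : ℝ)
    (hc : ∀ m : ℕ, m ≤ n → poch c m ≠ 0)
    (hd : ∀ m : ℕ, m ≤ n → poch (1 + a + b - c - n) m ≠ 0)
    (hcn : poch c n ≠ 0) (hcab : poch (c - a - b) n ≠ 0) :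
    ∑ m ∈ Finset.range (n + 1),
        poch a m * poch b m * poch (-(n : ℝ)) m /
          ((Nat.factorial m) * poch c m * poch (1 + a + b - c - n) m) =
      poch (c - a) n * poch (c - b) n / (poch c n * poch (c - a - b) n) :=
  stmt_7_general n a b c hcn hcab
end
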